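/- For quaternions p and s with s ∉ [p], the quadratic characteristic polynomial is nonzero: p² - 2 Re(s) p + |s|² ≠ 0. -/

import Mathlib

open Quaternion

/-- The 2-sphere `[p]` associated to a quaternion `p`. -/
def quatSphere (p : ℍ[ℝ]) : Set ℍ[ℝ] :=
  {q : ℍ[ℝ] | q.re = p.re ∧ ‖q.im‖ = ‖p.im‖}

/-!
Write `p = a + v` with `a` real and `v` imaginary, and `r = Re s`. Since `a` is central and
`v² = -|v|²`, the polynomial equals `((a - r)² + |Im s|² - |v|²) + 2(a - r) v`, a real plus an
imaginary quaternion. If it vanishes, then `a = r` or `v = 0`, and in either case the vanishing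
real part gives `Re s = a` and `|Im s| = |v|`, i.e. `s ∈ [p]`.
-/

namespace Quaternion

variable {R : Type*} [CommRing R]

theorem normSq_eq_re_sq_add_normSq_im (a : ℍ[R]) : normSq a = a.re ^ 2 + normSq a.im := by
  simp only [normSq_def', re_im, imI_im, imJ_im, imK_im]
  ring

theorem sq_sub_two_re_mul_add_normSq (p s : ℍ[R]) :
    p ^ 2 - 2 * (s.re : ℍ[R]) * p + ((normSq s : R) : ℍ[R]) =
      ↑((p.re - s.re) ^ 2 + normSq s.im - normSq p.im) + (2 * (p.re - s.re)) • p.im := by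
  rw [normSq_eq_re_sq_add_normSq_im s, normSq_def' p.im]
  ext <;> simp [sq, two_mul] <;> ring

end Quaternion

theorem mem_quatSphere_iff (p q : ℍ[ℝ]) :
    q ∈ quatSphere p ↔ q.re = p.re ∧ normSq q.im = normSq p.im := by
  simp only [quatSphere, Set.mem_ofPred_eq, normSq_eq_norm_mul_self, ← sq,
    sq_eq_sq₀ (norm_nonneg _) (norm_nonneg _)]

/-- For `s ∉ [p]`, the characteristic polynomial `p² - 2 Re(s) p + |s|²` is nonzero. -/
theorem charPoly_ne_zero (p s : ℍ[ℝ]) (hs : s ∉ quatSphere p) :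
    p ^ 2 - 2 * ((s.re : ℝ) : ℍ[ℝ]) * p + ((‖s‖ ^ 2 : ℝ) : ℍ[ℝ]) ≠ 0 := by
  intro h
  rw [sq ‖s‖, ← normSq_eq_norm_mul_self, sq_sub_two_re_mul_add_normSq] at h
  have hre : (p.re - s.re) ^ 2 + normSq s.im - normSq p.im = 0 := by
    simpa only [re_add, re_coe, re_smul, re_im, smul_zero, add_zero, re_zero] using
      congrArg (·.re) h
  have him : 2 * (p.re - s.re) = 0 ∨ p.im = 0 := by
    simpa only [im_add, im_coe, im_smul, im_idem, zero_add, im_zero, smul_eq_zero] using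
      congrArg (·.im) h
  refine hs ((mem_quatSphere_iff p s).2 ?_)
  rcases him with hre_eq | him_zero
  · have hsp : p.re = s.re := by linarith
    rw [hsp, sub_self] at hre
    exact ⟨hsp.symm, by linarith⟩
  · rw [him_zero, map_zero, sub_zero] at hre
    obtain ⟨hsq, hnorm⟩ := (add_eq_zero_iff_of_nonneg (sq_nonneg _) normSq_nonneg).1 hre
    refine ⟨(sub_eq_zero.1 (pow_eq_zero_iff two_ne_zero |>.1 hsq)).symm, ?_⟩
    rw [him_zero, hnorm, map_zero]
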